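/- arXiv:hep-th/0506014 — 4 statements merged into one kernel-verified Lean document; each statement's English description precedes it below -/
import Mathlib

section
/- Let V₁ and V₂ be finite-dimensional real vector spaces, let (e¹ₖ)_{k ∈ ι₁} be a basis of V₁ and (e²ₗ)_{l ∈ ι₂} a basis of V₂ (ι₁, ι₂ finite index types), and let L₁ ⊆ V₁ be the ℤ-span of the vectors e¹ₖ and L₂ ⊆ V₂ the ℤ-span of the vectors e²ₗ. Suppose α₁, β₁ ∈ V₁ are linearly independent, α₂, β₂ ∈ V₂ are linearly independent, and α₁ ⊗ α₂ + β₁ ⊗ β₂ = Σ_{k,l} N_{kl} · e¹ₖ ⊗ e²ₗ in V₁ ⊗ℝ V₂, where all coefficients N_{kl} are integers. Then the 2-dimensional subspace span_ℝ{α₁, β₁} contains two ℝ-linearly independent vectors belonging to L₁, and likewise span_ℝ{α₂, β₂} contains two ℝ-linearly independent vectors belonging to L₂. (This is the content of Theorem 2 of the paper: an integral flux G = Re(γΩ₁ ∧ conj(Ω₂)) forces both K3 surfaces to be attractive, i.e. the 2-planes 𝛀ⱼ each contain a rank-2 sublattice of the integral cohomology lattice.) -/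
open TensorProduct

lemma exists_dual_pair {V : Type*} [AddCommGroup V] [Module ℝ V] {x y : V}
    (h : LinearIndependent ℝ ![x, y]) :
    ∃ φ ψ : V →ₗ[ℝ] ℝ, φ x = 1 ∧ φ y = 0 ∧ ψ x = 0 ∧ ψ y = 1 := by
  classical
  have hne : x ≠ y := by
    have := h.injective.ne (show (0 : Fin 2) ≠ 1 by decide)
    simpa using this
  have hs := (linearIndepOn_id_range_iff h.injective).mpr h
  let B := Module.Basis.extend hs
  have hx : x ∈ hs.extend (Set.subset_univ _) :=
    hs.subset_extend _ ⟨0, rfl⟩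
  have hy : y ∈ hs.extend (Set.subset_univ _) :=
    hs.subset_extend _ ⟨1, rfl⟩
  have hBx : B ⟨x, hx⟩ = x := Module.Basis.extend_apply_self hs _
  have hBy : B ⟨y, hy⟩ = y := Module.Basis.extend_apply_self hs _
  have hrx : B.repr x = Finsupp.single ⟨x, hx⟩ 1 :=
    (congrArg (⇑B.repr) hBx.symm).trans (B.repr_self _)
  have hry : B.repr y = Finsupp.single ⟨y, hy⟩ 1 :=
    (congrArg (⇑B.repr) hBy.symm).trans (B.repr_self _)
  refine ⟨B.coord ⟨x, hx⟩, B.coord ⟨y, hy⟩, ?_, ?_, ?_, ?_⟩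
  · rw [Module.Basis.coord_apply, hrx, Finsupp.single_apply, if_pos rfl]
  · rw [Module.Basis.coord_apply, hry, Finsupp.single_apply,
      if_neg (fun hc => hne (congrArg Subtype.val hc).symm)]
  · rw [Module.Basis.coord_apply, hrx, Finsupp.single_apply,
      if_neg (fun hc => hne (congrArg Subtype.val hc))]
  · rw [Module.Basis.coord_apply, hry, Finsupp.single_apply, if_pos rfl]

lemma aux_side
    {V₁ V₂ : Type*} [AddCommGroup V₁] [Module ℝ V₁] [AddCommGroup V₂] [Module ℝ V₂]
    {ι₁ ι₂ : Type*} [Fintype ι₁] [Fintype ι₂]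
    (e₁ : Module.Basis ι₁ ℝ V₁) (e₂ : Module.Basis ι₂ ℝ V₂)
    (α₁ β₁ : V₁) (α₂ β₂ : V₂)
    (h₁ : LinearIndependent ℝ ![α₁, β₁])
    (h₂ : LinearIndependent ℝ ![α₂, β₂])
    (N : ι₁ → ι₂ → ℤ)
    (hG : α₁ ⊗ₜ[ℝ] α₂ + β₁ ⊗ₜ[ℝ] β₂ =
      ∑ k : ι₁, ∑ l : ι₂, (N k l : ℝ) • (e₁ k ⊗ₜ[ℝ] e₂ l)) :
    ∃ u v : V₁, u ∈ Submodule.span ℤ (Set.range ⇑e₁) ∧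
        v ∈ Submodule.span ℤ (Set.range ⇑e₁) ∧
        u ∈ Submodule.span ℝ {α₁, β₁} ∧ v ∈ Submodule.span ℝ {α₁, β₁} ∧
        LinearIndependent ℝ ![u, v] := by
  classical
  set u : ι₂ → V₁ := fun l => ∑ k, (N k l : ℝ) • e₁ k with hu
  -- key identity: applying any functional φ to the second factor of G
  have key : ∀ φ : V₂ →ₗ[ℝ] ℝ,
      φ α₂ • α₁ + φ β₂ • β₁ = ∑ l, φ (e₂ l) • u l := by
    intro φ
    have := congrArg (TensorProduct.lift ((LinearMap.lsmul ℝ V₁ ∘ₗ φ).flip)) hG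
    simp only [map_add, map_sum, map_smul, TensorProduct.lift.tmul, LinearMap.flip_apply,
      LinearMap.comp_apply, LinearMap.lsmul_apply] at this
    rw [this, Finset.sum_comm]
    refine Finset.sum_congr rfl fun l _ => ?_
    rw [hu, Finset.smul_sum]
    refine Finset.sum_congr rfl fun k _ => ?_
    rw [smul_smul, smul_smul, mul_comm]
  have hcoord : ∀ l l' : ι₂, e₂.coord l (e₂ l') = if l' = l then 1 else 0 := by
    intro l l'
    simp [Module.Basis.coord_apply, Module.Basis.repr_self, Finsupp.single_apply]
  have hval : ∀ l, u l = (e₂.coord l α₂) • α₁ + (e₂.coord l β₂) • β₁ := by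
    intro l
    rw [key (e₂.coord l),
      Finset.sum_eq_single l (fun l' _ hne => by rw [hcoord l l', if_neg hne, zero_smul])
        (fun h => absurd (Finset.mem_univ l) h), hcoord l l, if_pos rfl, one_smul]
  have uZ : ∀ l, u l ∈ Submodule.span ℤ (Set.range ⇑e₁) := by
    intro l
    refine Submodule.sum_mem _ fun k _ => ?_
    rw [Int.cast_smul_eq_zsmul]
    exact Submodule.smul_mem _ _ (Submodule.subset_span ⟨k, rfl⟩)
  have uW : ∀ l, u l ∈ Submodule.span ℝ {α₁, β₁} := by
    intro l
    rw [hval l]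
    exact Submodule.add_mem _
      (Submodule.smul_mem _ _ (Submodule.subset_span (by simp)))
      (Submodule.smul_mem _ _ (Submodule.subset_span (by simp)))
  -- span of the u l equals span {α₁, β₁}
  have hspan : Submodule.span ℝ (Set.range u) = Submodule.span ℝ {α₁, β₁} := by
    apply le_antisymm
    · rw [Submodule.span_le]
      rintro _ ⟨l, rfl⟩
      exact uW l
    · rw [Submodule.span_le]
      obtain ⟨φ, ψ, hφa, hφb, hψa, hψb⟩ := exists_dual_pair h₂
      intro z hz
      rcases hz with hz | hz
      · have := key φ
        rw [hφa, hφb, one_smul, zero_smul, add_zero] at this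
        rw [hz, this]
        exact Submodule.sum_mem _ fun l _ =>
          Submodule.smul_mem _ _ (Submodule.subset_span ⟨l, rfl⟩)
      · have := key ψ
        rw [hψa, hψb, zero_smul, one_smul, zero_add] at this
        rw [Set.mem_singleton_iff.mp hz, this]
        exact Submodule.sum_mem _ fun l _ =>
          Submodule.smul_mem _ _ (Submodule.subset_span ⟨l, rfl⟩)
  have hpair : ({α₁, β₁} : Set V₁) = Set.range ![α₁, β₁] := by
    ext z
    simp only [Set.mem_insert_iff, Set.mem_singleton_iff, Set.mem_range, Fin.exists_fin_two,
      Matrix.cons_val_zero, Matrix.cons_val_one, Matrix.head_cons]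
    tauto
  have hfr : Module.finrank ℝ (Submodule.span ℝ (Set.range u)) = 2 := by
    rw [hspan, hpair, finrank_span_eq_card h₁, Fintype.card_fin]
  obtain ⟨b, hbsub, hbspan, hbind⟩ := exists_linearIndependent ℝ (Set.range u)
  have hbfin : b.Finite := (Set.finite_range u).subset hbsub
  haveI : Fintype b := hbfin.fintype
  have hcard : b.toFinset.card = 2 := by
    have := finrank_span_set_eq_card hbind
    rw [hbspan, hfr] at this
    omega
  obtain ⟨x, hxb, y, hyb, hxy⟩ := Finset.one_lt_card.mp (by omega : 1 < b.toFinset.card)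
  rw [Set.mem_toFinset] at hxb hyb
  obtain ⟨lx, hlx⟩ := hbsub hxb
  obtain ⟨ly, hly⟩ := hbsub hyb
  have hind : LinearIndependent ℝ ![x, y] := by
    have hinj : Function.Injective (![⟨x, hxb⟩, ⟨y, hyb⟩] : Fin 2 → b) := by
      intro i j hij
      fin_cases i <;> fin_cases j <;> simp_all [Subtype.ext_iff]
    have := hbind.comp _ hinj
    convert this using 1
    funext i
    fin_cases i <;> simp
    rfl
  exact ⟨x, y, hlx ▸ uZ lx, hly ▸ uZ ly, hlx ▸ uW lx, hly ▸ uW ly, hind⟩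

/-- **Theorem 2** (Aspinwall–Kallosh): an integral flux
`G = α₁ ⊗ α₂ + β₁ ⊗ β₂` forces both K3 surfaces to be attractive, i.e. the
2-planes `span{αⱼ, βⱼ}` each contain two linearly independent vectors of the
integral lattice `Lⱼ` (the ℤ-span of the given basis). -/
theorem attractive_of_integral_flux
    {V₁ V₂ : Type*} [AddCommGroup V₁] [Module ℝ V₁] [AddCommGroup V₂] [Module ℝ V₂]
    {ι₁ ι₂ : Type*} [Fintype ι₁] [Fintype ι₂]
    (e₁ : Module.Basis ι₁ ℝ V₁) (e₂ : Module.Basis ι₂ ℝ V₂)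
    (α₁ β₁ : V₁) (α₂ β₂ : V₂)
    (h₁ : LinearIndependent ℝ ![α₁, β₁])
    (h₂ : LinearIndependent ℝ ![α₂, β₂])
    (N : ι₁ → ι₂ → ℤ)
    (hG : α₁ ⊗ₜ[ℝ] α₂ + β₁ ⊗ₜ[ℝ] β₂ =
      ∑ k : ι₁, ∑ l : ι₂, (N k l : ℝ) • (e₁ k ⊗ₜ[ℝ] e₂ l)) :
    (∃ u v : V₁, u ∈ Submodule.span ℤ (Set.range ⇑e₁) ∧
        v ∈ Submodule.span ℤ (Set.range ⇑e₁) ∧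
        u ∈ Submodule.span ℝ {α₁, β₁} ∧ v ∈ Submodule.span ℝ {α₁, β₁} ∧
        LinearIndependent ℝ ![u, v]) ∧
    (∃ u v : V₂, u ∈ Submodule.span ℤ (Set.range ⇑e₂) ∧
        v ∈ Submodule.span ℤ (Set.range ⇑e₂) ∧
        u ∈ Submodule.span ℝ {α₂, β₂} ∧ v ∈ Submodule.span ℝ {α₂, β₂} ∧
        LinearIndependent ℝ ![u, v]) := by
  refine ⟨aux_side e₁ e₂ α₁ β₁ α₂ β₂ h₁ h₂ N hG, ?_⟩
  have hG' : α₂ ⊗ₜ[ℝ] α₁ + β₂ ⊗ₜ[ℝ] β₁ =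
      ∑ l : ι₂, ∑ k : ι₁, ((fun l k => N k l) l k : ℝ) • (e₂ l ⊗ₜ[ℝ] e₁ k) := by
    have := congrArg (TensorProduct.comm ℝ V₁ V₂) hG
    simp only [map_add, map_sum, map_smul, TensorProduct.comm_tmul] at this
    rw [this, Finset.sum_comm]
  exact aux_side e₂ e₁ α₂ β₂ α₁ β₁ h₂ h₁ (fun l k => N k l) hG'
end

section
/- Let V₁ and V₂ be complex vector spaces with symmetric ℂ-bilinear forms B₁ and B₂, and let B denote the induced symmetric ℂ-bilinear form on V₁ ⊗ℂ V₂ determined by B(x₁⊗x₂, y₁⊗y₂) = B₁(x₁,y₁)·B₂(x₂,y₂). Let p₁, q₁ ∈ V₁ satisfy B₁(p₁,p₁) = 2a, B₁(q₁,q₁) = 2c, B₁(p₁,q₁) = b, and let p₂, q₂ ∈ V₂ satisfy B₂(p₂,p₂) = 2d, B₂(q₂,q₂) = 2f, B₂(p₂,q₂) = e, where a,b,c,d,e,f are real numbers with c > 0, f > 0, D₁ := 4ac − b² > 0, D₂ := 4df − e² > 0. Set τ₁ = (−b + i√D₁)/(2c), τ₂ = (−e + i√D₂)/(2f), Ω₁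 = p₁ + τ₁q₁, Ψ₁ = p₁ + conj(τ₁)q₁, Ω₂ = p₂ + τ₂q₂, Ψ₂ = p₂ + conj(τ₂)q₂, and for γ ∈ ℂ set G = (1/2)·(γ·Ω₁⊗Ψ₂ + conj(γ)·Ψ₁⊗Ω₂). Then (1/2)·B(G, G) = |γ|²·D₁·D₂/(4cf). (This is the tadpole formula (1/2)G² = |γ|²·det(Q₁Q₂)/(q₁²·q₂²), since q₁² = 2c and q₂² = 2f.) -/
open TensorProduct

set_option maxHeartbeats 1600000 in
/-- The tadpole formula `(1/2)G² = |γ|² det(Q₁Q₂)/(q₁² q₂²) = |γ|² D₁ D₂ /(4cf)`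
for the flux `G = (1/2)(γ Ω₁ ⊗ Ψ₂ + conj(γ) Ψ₁ ⊗ Ω₂)`. -/
theorem tadpole_formula
    {V₁ V₂ : Type*} [AddCommGroup V₁] [Module ℂ V₁] [AddCommGroup V₂] [Module ℂ V₂]
    (B₁ : V₁ →ₗ[ℂ] V₁ →ₗ[ℂ] ℂ) (hB₁ : ∀ v w, B₁ v w = B₁ w v)
    (B₂ : V₂ →ₗ[ℂ] V₂ →ₗ[ℂ] ℂ) (hB₂ : ∀ v w, B₂ v w = B₂ w v)
    (B : (V₁ ⊗[ℂ] V₂) →ₗ[ℂ] (V₁ ⊗[ℂ] V₂) →ₗ[ℂ] ℂ)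
    (hB : ∀ (x₁ y₁ : V₁) (x₂ y₂ : V₂),
      B (x₁ ⊗ₜ[ℂ] x₂) (y₁ ⊗ₜ[ℂ] y₂) = B₁ x₁ y₁ * B₂ x₂ y₂)
    (p₁ q₁ : V₁) (p₂ q₂ : V₂) (a b c d e f : ℝ)
    (hc : 0 < c) (hf : 0 < f)
    (hD₁ : 0 < 4 * a * c - b ^ 2) (hD₂ : 0 < 4 * d * f - e ^ 2)
    (hp₁p₁ : B₁ p₁ p₁ = ((2 * a : ℝ) : ℂ))
    (hq₁q₁ : B₁ q₁ q₁ = ((2 * c : ℝ) : ℂ))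
    (hp₁q₁ : B₁ p₁ q₁ = ((b : ℝ) : ℂ))
    (hp₂p₂ : B₂ p₂ p₂ = ((2 * d : ℝ) : ℂ))
    (hq₂q₂ : B₂ q₂ q₂ = ((2 * f : ℝ) : ℂ))
    (hp₂q₂ : B₂ p₂ q₂ = ((e : ℝ) : ℂ))
    (γ : ℂ)
    (τ₁ : ℂ) (hτ₁ : τ₁ = (-b + Real.sqrt (4 * a * c - b ^ 2) * Complex.I) / (2 * c))
    (τ₂ : ℂ) (hτ₂ : τ₂ = (-e + Real.sqrt (4 * d * f - e ^ 2) * Complex.I) / (2 * f))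
    (Ω₁ Ψ₁ : V₁) (hΩ₁ : Ω₁ = p₁ + τ₁ • q₁) (hΨ₁ : Ψ₁ = p₁ + (starRingEnd ℂ τ₁) • q₁)
    (Ω₂ Ψ₂ : V₂) (hΩ₂ : Ω₂ = p₂ + τ₂ • q₂) (hΨ₂ : Ψ₂ = p₂ + (starRingEnd ℂ τ₂) • q₂)
    (G : V₁ ⊗[ℂ] V₂)
    (hG : G = (1 / 2 : ℂ) • (γ • (Ω₁ ⊗ₜ[ℂ] Ψ₂) + (starRingEnd ℂ γ) • (Ψ₁ ⊗ₜ[ℂ] Ω₂))) :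
    (1 / 2 : ℂ) * B G G =
      ((‖γ‖ ^ 2 * (4 * a * c - b ^ 2) * (4 * d * f - e ^ 2) / (4 * c * f) : ℝ) : ℂ) := by

  have hc' : (c:ℂ) ≠ 0 := by exact_mod_cast hc.ne'
  have hf' : (f:ℂ) ≠ 0 := by exact_mod_cast hf.ne'
  have hs₁ : ((Real.sqrt (4*a*c-b^2) : ℝ):ℂ)^2 = 4*(a:ℂ)*c - b^2 := by
    rw [← Complex.ofReal_pow, Real.sq_sqrt hD₁.le]; push_cast; ring
  have hs₂ : ((Real.sqrt (4*d*f-e^2) : ℝ):ℂ)^2 = 4*(d:ℂ)*f - e^2 := by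
    rw [← Complex.ofReal_pow, Real.sq_sqrt hD₂.le]; push_cast; ring
  have hτ₁' : (starRingEnd ℂ) τ₁ = (-b - Real.sqrt (4*a*c-b^2) * Complex.I) / (2*c) := by
    rw [hτ₁]; simp [map_div₀, Complex.conj_I, map_ofNat]; field_simp; ring
  have hτ₂' : (starRingEnd ℂ) τ₂ = (-e - Real.sqrt (4*d*f-e^2) * Complex.I) / (2*f) := by
    rw [hτ₂]; simp [map_div₀, Complex.conj_I, map_ofNat]; field_simp; ring
  have hroot₁ : (a:ℂ) + b * τ₁ + c * τ₁^2 = 0 := by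
    rw [hτ₁]; field_simp
    linear_combination Complex.I^2*hs₁ + (4*(a:ℂ)*c-b^2)*Complex.I_sq
  have hroot₁' : (a:ℂ) + b * (starRingEnd ℂ) τ₁ + c * ((starRingEnd ℂ) τ₁)^2 = 0 := by
    rw [hτ₁']; field_simp
    linear_combination Complex.I^2*hs₁ + (4*(a:ℂ)*c-b^2)*Complex.I_sq
  have hroot₂ : (d:ℂ) + e * τ₂ + f * τ₂^2 = 0 := by
    rw [hτ₂]; field_simp
    linear_combination Complex.I^2*hs₂ + (4*(d:ℂ)*f-e^2)*Complex.I_sq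
  have hroot₂' : (d:ℂ) + e * (starRingEnd ℂ) τ₂ + f * ((starRingEnd ℂ) τ₂)^2 = 0 := by
    rw [hτ₂']; field_simp
    linear_combination Complex.I^2*hs₂ + (4*(d:ℂ)*f-e^2)*Complex.I_sq
  have hsum₁ : τ₁ + (starRingEnd ℂ) τ₁ = -(b:ℂ)/c := by
    rw [hτ₁', hτ₁]; field_simp; ring
  have hsum₂ : τ₂ + (starRingEnd ℂ) τ₂ = -(e:ℂ)/f := by
    rw [hτ₂', hτ₂]; field_simp; ring
  have hprod₁ : τ₁ * (starRingEnd ℂ) τ₁ = (a:ℂ)/c := by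
    rw [hτ₁', hτ₁]; field_simp
    linear_combination (-1:ℂ)*Complex.I^2*hs₁ + (-1:ℂ)*(4*(a:ℂ)*c-b^2)*Complex.I_sq
  have hprod₂ : τ₂ * (starRingEnd ℂ) τ₂ = (d:ℂ)/f := by
    rw [hτ₂', hτ₂]; field_simp
    linear_combination (-1:ℂ)*Complex.I^2*hs₂ + (-1:ℂ)*(4*(d:ℂ)*f-e^2)*Complex.I_sq

  have hsum₁c : (c:ℂ) * (τ₁ + (starRingEnd ℂ) τ₁) = -b := by
    rw [hτ₁', hτ₁]; field_simp; ring
  have hsum₂c : (f:ℂ) * (τ₂ + (starRingEnd ℂ) τ₂) = -e := by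
    rw [hτ₂', hτ₂]; field_simp; ring
  have hprod₁c : (c:ℂ) * (τ₁ * (starRingEnd ℂ) τ₁) = a := by
    rw [hτ₁', hτ₁]; field_simp
    linear_combination (-1:ℂ)*Complex.I^2*hs₁ + (-1:ℂ)*(4*(a:ℂ)*c-b^2)*Complex.I_sq
  have hprod₂c : (f:ℂ) * (τ₂ * (starRingEnd ℂ) τ₂) = d := by
    rw [hτ₂', hτ₂]; field_simp
    linear_combination (-1:ℂ)*Complex.I^2*hs₂ + (-1:ℂ)*(4*(d:ℂ)*f-e^2)*Complex.I_sq
  have e₁ : B₁ Ω₁ Ω₁ = 0 := by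
    rw [hΩ₁]
    simp only [map_add, map_smul, LinearMap.add_apply, LinearMap.smul_apply, smul_eq_mul,
      hp₁p₁, hq₁q₁, hp₁q₁, hB₁ q₁ p₁]
    push_cast
    linear_combination 2 * hroot₁
  have e₂ : B₁ Ψ₁ Ψ₁ = 0 := by
    rw [hΨ₁]
    simp only [map_add, map_smul, LinearMap.add_apply, LinearMap.smul_apply, smul_eq_mul,
      hp₁p₁, hq₁q₁, hp₁q₁, hB₁ q₁ p₁]
    push_cast
    linear_combination 2 * hroot₁'
  have e₃ : B₁ Ω₁ Ψ₁ = (4*(a:ℂ)*c - b^2)/c := by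
    rw [hΩ₁, hΨ₁]
    simp only [map_add, map_smul, LinearMap.add_apply, LinearMap.smul_apply, smul_eq_mul,
      hp₁p₁, hq₁q₁, hp₁q₁, hB₁ q₁ p₁]
    push_cast
    field_simp
    linear_combination (b:ℂ) * hsum₁c + 2*(c:ℂ) * hprod₁c
  have f₁ : B₂ Ω₂ Ω₂ = 0 := by
    rw [hΩ₂]
    simp only [map_add, map_smul, LinearMap.add_apply, LinearMap.smul_apply, smul_eq_mul,
      hp₂p₂, hq₂q₂, hp₂q₂, hB₂ q₂ p₂]
    push_cast
    linear_combination 2 * hroot₂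
  have f₂ : B₂ Ψ₂ Ψ₂ = 0 := by
    rw [hΨ₂]
    simp only [map_add, map_smul, LinearMap.add_apply, LinearMap.smul_apply, smul_eq_mul,
      hp₂p₂, hq₂q₂, hp₂q₂, hB₂ q₂ p₂]
    push_cast
    linear_combination 2 * hroot₂'
  have f₃ : B₂ Ω₂ Ψ₂ = (4*(d:ℂ)*f - e^2)/f := by
    rw [hΩ₂, hΨ₂]
    simp only [map_add, map_smul, LinearMap.add_apply, LinearMap.smul_apply, smul_eq_mul,
      hp₂p₂, hq₂q₂, hp₂q₂, hB₂ q₂ p₂]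
    push_cast
    field_simp
    linear_combination (e:ℂ) * hsum₂c + 2*(f:ℂ) * hprod₂c
  have e₃' : B₁ Ψ₁ Ω₁ = (4*(a:ℂ)*c - b^2)/c := by rw [hB₁ Ψ₁ Ω₁]; exact e₃
  have f₃' : B₂ Ψ₂ Ω₂ = (4*(d:ℂ)*f - e^2)/f := by rw [hB₂ Ψ₂ Ω₂]; exact f₃
  have hγ : γ * (starRingEnd ℂ) γ = ((‖γ‖ : ℝ) : ℂ)^2 := by
    rw [Complex.mul_conj]; norm_cast; exact (Complex.sq_norm γ).symm
  have hc1 : (c:ℂ) * (c:ℂ)⁻¹ = 1 := mul_inv_cancel₀ hc'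
  have hf1 : (f:ℂ) * (f:ℂ)⁻¹ = 1 := mul_inv_cancel₀ hf' 
  rw [hG]
  simp only [map_add, map_smul, LinearMap.add_apply, LinearMap.smul_apply, smul_eq_mul,
    hB, e₁, e₂, e₃, f₁, f₂, f₃, e₃', f₃']
  push_cast
  field_simp
  linear_combination 8 * (((4*(a:ℂ)*c - b^2) * (4*(d:ℂ)*f - e^2))) * hγ
end

section
/- Let a, b, c be integers such that b² − 4ac is not the square of any integer, and let Q be the symmetric matrix ((2a, b), (b, 2c)). Then there exists a matrix M ∈ SL(2, ℤ) such that MᵀQM = ((2a', b'), (b', 2c')) with integers a', b', c' satisfying |b'| ≤ |c'| ≤ |a'|. (This is Theorem 4 of the paper, quoted from Hua's number theory text: every SL(2,ℤ)-equivalence class of an even integral binary quadratic form whose negated determinant −det Q = b² − 4ac is not a perfect square contains a representative with |b| ≤ |c| ≤ |a|.) -/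
open Matrix

private lemma tr2' (a b c d : ℤ) : !![a,b;c,d]ᵀ = !![a,c;b,d] := by
  ext i j; fin_cases i <;> fin_cases j <;> rfl

private lemma transl_calc (a b c n : ℤ) :
    (!![(1:ℤ),0;n,1])ᵀ * !![2*a,b;b,2*c] * !![(1:ℤ),0;n,1]
      = !![2*(a+n*b+n^2*c), b+2*n*c; b+2*n*c, 2*c] := by
  rw [tr2', Matrix.mul_fin_two, Matrix.mul_fin_two]
  congr 1 <;> ring_nf

private lemma swap_calc (a b c : ℤ) :
    (!![(0:ℤ),-1;1,0])ᵀ * !![2*a,b;b,2*c] * !![(0:ℤ),-1;1,0]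
      = !![2*c, -b; -b, 2*a] := by
  rw [tr2', Matrix.mul_fin_two, Matrix.mul_fin_two]
  congr 1 <;> ring_nf

private lemma exists_shift (b d : ℤ) (hd : 0 < d) : ∃ m : ℤ, |b + 2*d*m| ≤ d := by
  refine ⟨-((b+d)/(2*d)), ?_⟩
  have h1 := Int.emod_nonneg (b+d) (by omega : (2*d) ≠ 0)
  have h2 := Int.emod_lt_of_pos (b+d) (by omega : 0 < 2*d)
  have h3 : (b+d) % (2*d) = (b+d) - 2*d*((b+d)/(2*d)) := by rw [Int.emod_def]
  have h4 : 2*d*(-((b+d)/(2*d))) = -(2*d*((b+d)/(2*d))) := by ring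
  rw [abs_le]; omega

private lemma exists_shift' (b c : ℤ) (hc : c ≠ 0) : ∃ n : ℤ, |b + 2*n*c| ≤ |c| := by
  obtain ⟨m, hm⟩ := exists_shift b |c| (abs_pos.mpr hc)
  rcases lt_or_gt_of_ne hc with hneg | hpos
  · refine ⟨-m, ?_⟩
    rw [abs_of_neg hneg] at hm ⊢
    convert hm using 3; ring
  · refine ⟨m, ?_⟩
    rw [abs_of_pos hpos] at hm ⊢
    convert hm using 3; ring

private def translM (n : ℤ) : Matrix.SpecialLinearGroup (Fin 2) ℤ :=
  ⟨!![(1:ℤ),0;n,1], by simp [Matrix.det_fin_two_of]⟩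

private def swapM : Matrix.SpecialLinearGroup (Fin 2) ℤ :=
  ⟨!![(0:ℤ),-1;1,0], by simp [Matrix.det_fin_two_of]⟩

private lemma main_lemma (k : ℕ) : ∀ a b c : ℤ,
    (¬ ∃ n : ℤ, b ^ 2 - 4 * a * c = n ^ 2) → c.natAbs ≤ k →
    ∃ M : Matrix.SpecialLinearGroup (Fin 2) ℤ, ∃ a' b' c' : ℤ,
      (M : Matrix (Fin 2) (Fin 2) ℤ)ᵀ * !![2 * a, b; b, 2 * c] *
          (M : Matrix (Fin 2) (Fin 2) ℤ) = !![2 * a', b'; b', 2 * c'] ∧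
        |b'| ≤ |c'| ∧ |c'| ≤ |a'| := by
  induction k with
  | zero =>
    intro a b c h hk
    have hc : c = 0 := by omega
    exact absurd ⟨b, by rw [hc]; ring⟩ h
  | succ k ih =>
    intro a b c h hk
    have hc : c ≠ 0 := by
      rintro rfl
      exact h ⟨b, by ring⟩
    obtain ⟨n, hn⟩ := exists_shift' b c hc
    set a₁ : ℤ := a + n*b + n^2*c with ha₁
    set b₁ : ℤ := b + 2*n*c with hb₁
    rcases le_or_gt |c| |a₁| with hca | hca
    · -- done with the translation alone
      refine ⟨translM n, a₁, b₁, c, ?_, hn, hca⟩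
      have := transl_calc a b c n
      simpa [translM] using this
    · -- swap and recurse
      have hd : ¬ ∃ m : ℤ, (-b₁) ^ 2 - 4 * c * a₁ = m ^ 2 := by
        rintro ⟨m, hm⟩
        apply h
        exact ⟨m, by rw [← hm]; ring⟩
      have hsize : a₁.natAbs ≤ k := by
        have h1 := hca
        rw [Int.abs_eq_natAbs, Int.abs_eq_natAbs] at h1
        omega
      obtain ⟨M₂, a', b', c', hM₂, hb', hc'⟩ := ih c (-b₁) a₁ hd hsize
      refine ⟨translM n * swapM * M₂, a', b', c', ?_, hb', hc'⟩
      set T : Matrix (Fin 2) (Fin 2) ℤ := (translM n : Matrix (Fin 2) (Fin 2) ℤ) with hT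
      set S : Matrix (Fin 2) (Fin 2) ℤ := (swapM : Matrix (Fin 2) (Fin 2) ℤ) with hS
      set N : Matrix (Fin 2) (Fin 2) ℤ := (M₂ : Matrix (Fin 2) (Fin 2) ℤ) with hN
      have key : ((translM n * swapM * M₂ : Matrix.SpecialLinearGroup (Fin 2) ℤ) :
          Matrix (Fin 2) (Fin 2) ℤ) = T * S * N := by
        simp [hT, hS, hN]
      rw [key]
      have e1 : Tᵀ * !![2 * a, b; b, 2 * c] * T = !![2*a₁, b₁; b₁, 2*c] := by
        simpa [hT, translM] using transl_calc a b c n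
      have e2 : Sᵀ * !![2*a₁, b₁; b₁, 2*c] * S = !![2*c, -b₁; -b₁, 2*a₁] := by
        simpa [hS, swapM] using swap_calc a₁ b₁ c
      calc (T * S * N)ᵀ * !![2 * a, b; b, 2 * c] * (T * S * N)
          = Nᵀ * (Sᵀ * (Tᵀ * !![2 * a, b; b, 2 * c] * T) * S) * N := by
            simp only [Matrix.transpose_mul]
            noncomm_ring
        _ = !![2 * a', b'; b', 2 * c'] := by rw [e1, e2]; exact hM₂

/-- **Theorem 4** (Hua): every `SL(2,ℤ)`-equivalence class of an even integral
binary quadratic form `Q = ((2a,b),(b,2c))` whose negated determinant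
`b² − 4ac` is not a perfect square contains a reduced representative with
`|b'| ≤ |c'| ≤ |a'|`. -/
theorem reduced_representative_exists
    (a b c : ℤ) (h : ¬ ∃ n : ℤ, b ^ 2 - 4 * a * c = n ^ 2) :
    ∃ M : Matrix.SpecialLinearGroup (Fin 2) ℤ, ∃ a' b' c' : ℤ,
      (M : Matrix (Fin 2) (Fin 2) ℤ)ᵀ * !![2 * a, b; b, 2 * c] *
          (M : Matrix (Fin 2) (Fin 2) ℤ) = !![2 * a', b'; b', 2 * c'] ∧
        |b'| ≤ |c'| ∧ |c'| ≤ |a'| := by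
  exact main_lemma c.natAbs a b c h le_rfl
end

section
/- The set of 6-tuples of integers (a, b, c, d, e, f) satisfying all of the following conditions is finite: a > 0, c > 0, d > 0, f > 0, |b| ≤ c ≤ a, |e| ≤ f ≤ d, and there exists a nonzero γ ∈ ℂ such that Re(γ), Re(γ·τ₁), Re(γ·conj(τ₂)) and Re(γ·τ₁·conj(τ₂)) are all integers and |γ|²·D₁·D₂ ≤ 96·c·f, where D₁ := 4ac − b², D₂ := 4df − e², τ₁ = (−b + i·√D₁)/(2c) and τ₂ = (−e + i·√D₂)/(2f). (This is the paper's finiteness theorem: there are only finitely many pairs of reduced attractive K3 data admitting an integral flux G with (1/2)G² ≤ 24, since (1/2)G² = |γ|²·D₁·D₂/(4cf).) -/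
lemma hlp_div {C D F : ℝ} (hC : 0 < C) (h : 4*C^2*D ≤ 96*C*F) : C*D ≤ 24*F := by
  nlinarith

lemma hlp_boundA {A C F B2 : ℝ} (hC : 1 ≤ C) (hF : 1 ≤ F) (hB2 : B2 ≤ C^2)
    (hCF : C*F ≤ 11) (h : F*(4*A*C - B2) ≤ 32*C) : A ≤ 32 := by
  nlinarith [mul_pos (lt_of_lt_of_le one_pos hC) (lt_of_lt_of_le one_pos hF)]

lemma hlp_cf {C F D2 : ℝ} (hC : 1 ≤ C) (hF : 1 ≤ F) (hD2 : 3*F^2 ≤ D2)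
    (h : C*D2 ≤ 32*F) : C*F ≤ 11 := by
  nlinarith

lemma hlp_fd1 {F C D1 D2 : ℝ} (hF : 0 < F) (hD1 : 0 < D1) (hD2 : 3*F^2 ≤ D2)
    (h : D1*D2 ≤ 96*C*F) : F*D1 ≤ 32*C := by
  nlinarith [mul_le_mul_of_nonneg_left hD2 hD1.le]

lemma hlp_k {C N Z : ℝ} (h : Z = 4*C^2*N) (hN : 1 ≤ N) : 4*C^2 ≤ Z := by
  nlinarith [sq_nonneg C]

lemma hlp_dd {S D1 D2 T : ℝ} (hS : 1 ≤ S) (hP : 0 < D1) (hP2 : 0 < D2)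
    (h : S*D1*D2 ≤ T) : D1*D2 ≤ T := by
  nlinarith [mul_pos hP hP2]

lemma hlp_d1 {A B C : ℝ} (hC : 0 < C) (hca : C ≤ A) (hb : B^2 ≤ C^2) :
    3*C^2 ≤ 4*A*C - B^2 := by
  nlinarith [mul_le_mul_of_nonneg_right hca hC.le]

lemma hlp_sq {n : ℤ} (h : n ≠ 0) : (1:ℝ) ≤ (n:ℝ)^2 := by
  have h1 : 1 ≤ |n| := Int.one_le_abs h
  have h2 : (1:ℤ) ≤ n^2 := by nlinarith [sq_abs n, abs_nonneg n]
  exact_mod_cast h2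

lemma aux_bound (a b c d e f : ℤ) (x y s1 s2 : ℝ) (n0 n1 n2 : ℤ)
    (ha : 0 < a) (hc : 0 < c) (hd : 0 < d) (hf : 0 < f)
    (hbc : |b| ≤ c) (hca : c ≤ a) (hef : |e| ≤ f) (hfd : f ≤ d)
    (hs1 : s1 ^ 2 = ((4*a*c - b^2 : ℤ) : ℝ)) (hs1p : 0 ≤ s1)
    (hs2 : s2 ^ 2 = ((4*d*f - e^2 : ℤ) : ℝ)) (hs2p : 0 ≤ s2)
    (hxy : ¬(x = 0 ∧ y = 0))
    (h0 : x = (n0 : ℝ))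
    (h1 : x * (-(b:ℝ)) - y * s1 = 2 * c * n1)
    (h2 : x * (-(e:ℝ)) + y * s2 = 2 * f * n2)
    (hineq : (x^2 + y^2) * ((4*a*c - b^2 : ℤ):ℝ) * ((4*d*f - e^2 : ℤ):ℝ) ≤ 96 * c * f) :
    a ≤ 32 ∧ d ≤ 32 := by
  have hb2 : b^2 ≤ c^2 := sq_le_sq' (abs_le.mp hbc).1 (abs_le.mp hbc).2
  have he2 : e^2 ≤ f^2 := sq_le_sq' (abs_le.mp hef).1 (abs_le.mp hef).2
  have hcr : (0:ℝ) < c := by exact_mod_cast hc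
  have hfr : (0:ℝ) < f := by exact_mod_cast hf
  have hcr1 : (1:ℝ) ≤ c := by exact_mod_cast hc
  have hfr1 : (1:ℝ) ≤ f := by exact_mod_cast hf
  have hcar : (c:ℝ) ≤ a := by exact_mod_cast hca
  have hfdr : (f:ℝ) ≤ d := by exact_mod_cast hfd
  have hb2r : (b:ℝ)^2 ≤ (c:ℝ)^2 := by exact_mod_cast hb2
  have he2r : (e:ℝ)^2 ≤ (f:ℝ)^2 := by exact_mod_cast he2
  set D1 : ℝ := ((4*a*c - b^2 : ℤ):ℝ) with hD1def
  set D2 : ℝ := ((4*d*f - e^2 : ℤ):ℝ) with hD2def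
  have hD1eq : D1 = 4*(a:ℝ)*(c:ℝ) - (b:ℝ)^2 := by rw [hD1def]; push_cast; ring
  have hD2eq : D2 = 4*(d:ℝ)*(f:ℝ) - (e:ℝ)^2 := by rw [hD2def]; push_cast; ring
  have hD1ge : 3*(c:ℝ)^2 ≤ D1 := by
    rw [hD1eq]; exact hlp_d1 hcr hcar hb2r
  have hD2ge : 3*(f:ℝ)^2 ≤ D2 := by
    rw [hD2eq]; exact hlp_d1 hfr hfdr he2r
  have hD1pos : 0 < D1 := lt_of_lt_of_le (by positivity) hD1ge
  have hD2pos : 0 < D2 := lt_of_lt_of_le (by positivity) hD2ge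
  have hs1pos : 0 < s1 := by
    rcases lt_or_eq_of_le hs1p with h | h
    · exact h
    · exfalso; rw [← h] at hs1; simp at hs1; linarith
  have hs2pos : 0 < s2 := by
    rcases lt_or_eq_of_le hs2p with h | h
    · exact h
    · exfalso; rw [← h] at hs2; simp at hs2; linarith
  suffices hsuf : (a:ℝ) ≤ 32 ∧ (d:ℝ) ≤ 32 by
    exact ⟨by exact_mod_cast hsuf.1, by exact_mod_cast hsuf.2⟩
  have key : (f:ℝ) * D1 ≤ 32 * (c:ℝ) ∧ (c:ℝ) * D2 ≤ 32 * (f:ℝ) := by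
    by_cases hn0 : n0 = 0
    · have hx0 : x = 0 := by rw [h0, hn0]; simp
      rw [hx0] at h1 h2 hineq
      have hy1 : y * s1 = -(2*(c:ℝ)*(n1:ℝ)) := by linarith
      have hy2 : y * s2 = 2*(f:ℝ)*(n2:ℝ) := by linarith
      have hn1 : n1 ≠ 0 := by
        intro h; rw [h] at hy1; simp at hy1
        rcases hy1 with h' | h'
        · exact hxy ⟨hx0, h'⟩
        · exact absurd h' (ne_of_gt hs1pos)
      have hn2 : n2 ≠ 0 := by
        intro h; rw [h] at hy2; simp at hy2
        rcases hy2 with h' | h'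
        · exact hxy ⟨hx0, h'⟩
        · exact absurd h' (ne_of_gt hs2pos)
      have hn1sq : (1:ℝ) ≤ (n1:ℝ)^2 := hlp_sq hn1
      have hn2sq : (1:ℝ) ≤ (n2:ℝ)^2 := hlp_sq hn2
      have key1 : y^2 * D1 = 4*(c:ℝ)^2*(n1:ℝ)^2 := by
        rw [← hs1]
        have hsq : (y*s1)^2 = (-(2*(c:ℝ)*(n1:ℝ)))^2 := by rw [hy1]
        linear_combination hsq
      have key2 : y^2 * D2 = 4*(f:ℝ)^2*(n2:ℝ)^2 := by
        rw [← hs2]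
        have hsq : (y*s2)^2 = (2*(f:ℝ)*(n2:ℝ))^2 := by rw [hy2]
        linear_combination hsq
      have k1 : 4*(c:ℝ)^2 ≤ y^2*D1 := hlp_k key1 hn1sq
      have k2 : 4*(f:ℝ)^2 ≤ y^2*D2 := hlp_k key2 hn2sq
      have hineq' : y^2*D1*D2 ≤ 96*(c:ℝ)*f := by
        have hh : ((0:ℝ)^2 + y^2)*D1*D2 = y^2*D1*D2 := by ring
        linarith [hineq]
      have h4c : 4*(c:ℝ)^2*D2 ≤ 96*(c:ℝ)*f :=
        le_trans (mul_le_mul_of_nonneg_right k1 hD2pos.le) hineq'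
      have h4f : 4*(f:ℝ)^2*D1 ≤ 96*(f:ℝ)*c := by
        have t1 := mul_le_mul_of_nonneg_right k2 hD1pos.le
        have t2 : y^2*D2*D1 = y^2*D1*D2 := by ring
        have t3 : (96:ℝ)*(f:ℝ)*c = 96*(c:ℝ)*f := by ring
        linarith
      have hcD2 : (c:ℝ)*D2 ≤ 24*(f:ℝ) := hlp_div hcr h4c
      have hfD1 : (f:ℝ)*D1 ≤ 24*(c:ℝ) := hlp_div hfr h4f
      exact ⟨by linarith, by linarith⟩
    · have hn0sq : (1:ℝ) ≤ (n0:ℝ)^2 := hlp_sq hn0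
      have hx2 : (1:ℝ) ≤ x^2 + y^2 := by
        have h' : (1:ℝ) ≤ x^2 := by rw [h0]; exact hn0sq
        linarith [sq_nonneg y]
      have hDD : D1*D2 ≤ 96*(c:ℝ)*f := hlp_dd hx2 hD1pos hD2pos hineq
      have hfD1 : (f:ℝ)*D1 ≤ 32*(c:ℝ) := hlp_fd1 hfr hD1pos hD2ge hDD
      have hcD2 : (c:ℝ)*D2 ≤ 32*(f:ℝ) := by
        refine hlp_fd1 hcr hD2pos hD1ge ?_
        have t2 : D2*D1 = D1*D2 := by ring
        have t3 : (96:ℝ)*(f:ℝ)*c = 96*(c:ℝ)*f := by ring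
        linarith
      exact ⟨hfD1, hcD2⟩
  obtain ⟨hfD1, hcD2⟩ := key
  have hCF : (c:ℝ)*f ≤ 11 := hlp_cf hcr1 hfr1 hD2ge hcD2
  have hFC : (f:ℝ)*c ≤ 11 := by
    have : (f:ℝ)*c = (c:ℝ)*f := by ring
    linarith
  constructor
  · refine hlp_boundA hcr1 hfr1 hb2r hCF ?_
    rw [hD1eq] at hfD1; linarith
  · refine hlp_boundA hfr1 hcr1 he2r hFC ?_
    rw [hD2eq] at hcD2; linarith

lemma hlp_d1i {a b c : ℤ} (hc : 0 < c) (hca : c ≤ a) (hbc : |b| ≤ c) :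
    0 ≤ 4*a*c - b^2 := by
  have hb2 : b^2 ≤ c^2 := sq_le_sq' (abs_le.mp hbc).1 (abs_le.mp hbc).2
  nlinarith [mul_le_mul_of_nonneg_right hca hc.le]

/-- Finiteness: there are only finitely many reduced pairs of attractive K3
data `(a,b,c,d,e,f)` admitting a nonzero `γ` giving an integral flux `G` with
`(1/2)G² = |γ|² D₁ D₂/(4cf) ≤ 24`. -/
theorem finitely_many_flux_data :
    {t : ℤ × ℤ × ℤ × ℤ × ℤ × ℤ |
      0 < t.1 ∧ 0 < t.2.2.1 ∧ 0 < t.2.2.2.1 ∧ 0 < t.2.2.2.2.2 ∧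
      |t.2.1| ≤ t.2.2.1 ∧ t.2.2.1 ≤ t.1 ∧
      |t.2.2.2.2.1| ≤ t.2.2.2.2.2 ∧ t.2.2.2.2.2 ≤ t.2.2.2.1 ∧
      ∃ γ : ℂ, γ ≠ 0 ∧
        (∃ n : ℤ, γ.re = (n : ℝ)) ∧
        (∃ n : ℤ, (γ * ((-(t.2.1 : ℝ) +
            Real.sqrt ((4 * t.1 * t.2.2.1 - t.2.1 ^ 2 : ℤ) : ℝ) * Complex.I) /
              (2 * (t.2.2.1 : ℝ)))).re = (n : ℝ)) ∧
        (∃ n : ℤ, (γ * starRingEnd ℂ ((-(t.2.2.2.2.1 : ℝ) +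
            Real.sqrt ((4 * t.2.2.2.1 * t.2.2.2.2.2 - t.2.2.2.2.1 ^ 2 : ℤ) : ℝ) * Complex.I) /
              (2 * (t.2.2.2.2.2 : ℝ)))).re = (n : ℝ)) ∧
        (∃ n : ℤ, (γ * ((-(t.2.1 : ℝ) +
            Real.sqrt ((4 * t.1 * t.2.2.1 - t.2.1 ^ 2 : ℤ) : ℝ) * Complex.I) /
              (2 * (t.2.2.1 : ℝ))) * starRingEnd ℂ ((-(t.2.2.2.2.1 : ℝ) +
            Real.sqrt ((4 * t.2.2.2.1 * t.2.2.2.2.2 - t.2.2.2.2.1 ^ 2 : ℤ) : ℝ) * Complex.I) /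
              (2 * (t.2.2.2.2.2 : ℝ)))).re = (n : ℝ)) ∧
        ‖γ‖ ^ 2 * ((4 * t.1 * t.2.2.1 - t.2.1 ^ 2 : ℤ) : ℝ) *
            ((4 * t.2.2.2.1 * t.2.2.2.2.2 - t.2.2.2.2.1 ^ 2 : ℤ) : ℝ) ≤
          96 * (t.2.2.1 : ℝ) * (t.2.2.2.2.2 : ℝ)}.Finite := by
  have hI : (Set.Icc (-32:ℤ) 32).Finite := Set.finite_Icc _ _
  apply Set.Finite.subset (hI.prod (hI.prod (hI.prod (hI.prod (hI.prod hI)))))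
  rintro ⟨a, b, c, d, e, f⟩
    ⟨ha, hc, hd, hf, hbc, hca, hef, hfd, γ, hγ0, ⟨n0, h0⟩, ⟨n1, h1⟩, ⟨n2, h2⟩, -, hineq⟩
  simp only [] at ha hc hd hf hbc hca hef hfd h0 h1 h2 hineq
  -- notation
  set s1 : ℝ := Real.sqrt ((4 * a * c - b ^ 2 : ℤ) : ℝ) with hs1def
  set s2 : ℝ := Real.sqrt ((4 * d * f - e ^ 2 : ℤ) : ℝ) with hs2def
  have hcr : (0:ℝ) < (c:ℝ) := by exact_mod_cast hc
  have hfr : (0:ℝ) < (f:ℝ) := by exact_mod_cast hf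
  have hD1nn : (0:ℝ) ≤ ((4 * a * c - b ^ 2 : ℤ) : ℝ) := by
    exact_mod_cast hlp_d1i hc hca hbc
  have hD2nn : (0:ℝ) ≤ ((4 * d * f - e ^ 2 : ℤ) : ℝ) := by
    exact_mod_cast hlp_d1i hf hfd hef
  have hs1sq : s1 ^ 2 = ((4 * a * c - b ^ 2 : ℤ) : ℝ) := Real.sq_sqrt hD1nn
  have hs2sq : s2 ^ 2 = ((4 * d * f - e ^ 2 : ℤ) : ℝ) := Real.sq_sqrt hD2nn
  -- h1 in real form
  have h1' : γ.re * (-(b:ℝ)) - γ.im * s1 = 2 * c * n1 := by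
    have e1 : γ * (((-(b : ℝ) : ℂ) + (s1:ℂ) * Complex.I) / (2 * (c : ℝ))) =
        (γ * ((-(b : ℝ) : ℂ) + (s1:ℂ) * Complex.I)) / ((2 * (c:ℝ) : ℝ) : ℂ) := by
      push_cast; ring
    rw [e1, Complex.div_ofReal_re] at h1
    have hre : (γ * ((-(b : ℝ) : ℂ) + (s1:ℂ) * Complex.I)).re =
        γ.re * (-(b:ℝ)) - γ.im * s1 := by simp [Complex.mul_re]
    rw [hre] at h1
    field_simp at h1
    linarith
  have h2' : γ.re * (-(e:ℝ)) + γ.im * s2 = 2 * f * n2 := by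
    have e2 : γ * starRingEnd ℂ (((-(e : ℝ) : ℂ) + (s2:ℂ) * Complex.I) / (2 * (f : ℝ))) =
        (γ * ((-(e : ℝ) : ℂ) - (s2:ℂ) * Complex.I)) / ((2 * (f:ℝ) : ℝ) : ℂ) := by
      simp only [map_div₀, map_add, map_neg, map_mul, Complex.conj_ofReal, Complex.conj_I,
        map_ofNat]
      push_cast; ring
    rw [e2, Complex.div_ofReal_re] at h2
    have hre : (γ * ((-(e : ℝ) : ℂ) - (s2:ℂ) * Complex.I)).re =
        γ.re * (-(e:ℝ)) + γ.im * s2 := by simp [Complex.mul_re]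
    rw [hre] at h2
    field_simp at h2
    linarith
  have habs : ‖γ‖ ^ 2 = γ.re ^ 2 + γ.im ^ 2 := by
    rw [Complex.sq_norm, Complex.normSq_apply]; ring
  rw [habs] at hineq
  have hxy : ¬(γ.re = 0 ∧ γ.im = 0) := by
    rintro ⟨hr, hi⟩
    exact hγ0 (by apply Complex.ext <;> simp [hr, hi])
  have key := aux_bound a b c d e f γ.re γ.im s1 s2 n0 n1 n2
    ha hc hd hf hbc hca hef hfd hs1sq (Real.sqrt_nonneg _) hs2sq (Real.sqrt_nonneg _)
    hxy h0 h1' h2' hineq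
  obtain ⟨hb1, hb2⟩ := abs_le.mp hbc
  obtain ⟨he1, he2⟩ := abs_le.mp hef
  obtain ⟨ka, kd⟩ := key
  simp only [Set.mem_prod, Set.mem_Icc]
  omega
end
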